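/- arXiv:2604.12420 — 4 statements merged into one kernel-verified Lean document; each statement's English description precedes it below -/
import Mathlib

section
/- Let N be a positive natural number and let M be an N×N real symmetric positive definite matrix with trace(M) = N². Then trace(M⁻¹) = 1 if and only if M = N·I, where I is the N×N identity matrix. -/
/-!
Writing `B = M - c • 1`, the positive semidefinite matrix `Bᴴ M⁻¹ B = M - 2c • 1 + c² • M⁻¹`
has trace `tr M - 2c·n + c² tr M⁻¹`, which therefore vanishes iff `B = 0`. With `c = N` and
`tr M = N²` this trace is `N² (tr M⁻¹ - 1)`.
-/

open scoped ComplexOrder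

namespace Matrix

variable {n : Type*} [Fintype n]

theorem trace_sub_smul_one_mul_inv_mul_sub_smul_one [DecidableEq n] {R : Type*} [CommRing R]
    {M : Matrix n n R} (hM : IsUnit M.det) (c : R) :
    ((M - c • 1) * M⁻¹ * (M - c • 1)).trace
      = M.trace - 2 * c * Fintype.card n + c ^ 2 * M⁻¹.trace := by
  have hexpand : (M - c • 1) * M⁻¹ * (M - c • 1) = M - (2 * c) • 1 + c ^ 2 • M⁻¹ := by
    simp only [sub_mul, mul_sub, Matrix.smul_mul, Matrix.mul_smul, Matrix.one_mul,
      Matrix.mul_one, mul_nonsing_inv _ hM, nonsing_inv_mul _ hM, smul_smul]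
    module
  rw [hexpand, trace_add, trace_sub, trace_smul, trace_smul, trace_one, smul_eq_mul, smul_eq_mul]

variable {𝕜 : Type*} [RCLike 𝕜]

theorem PosDef.conjTranspose_mul_mul_same_eq_zero_iff {m : Type*} [Fintype m]
    {A : Matrix n n 𝕜} (hA : A.PosDef) {B : Matrix n m 𝕜} : Bᴴ * A * B = 0 ↔ B = 0 := by
  classical
  refine ⟨fun h => ext_of_mulVec_single fun j => ?_, fun h => by simp [h]⟩
  rw [zero_mulVec]
  by_contra hBj
  have hpos := hA.dotProduct_mulVec_pos hBj
  simp only [star_mulVec, dotProduct_mulVec, vecMul_vecMul, h, vecMul_zero, zero_dotProduct,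
    lt_self_iff_false] at hpos

theorem PosDef.trace_add_sq_mul_trace_inv_eq_iff [DecidableEq n] {M : Matrix n n 𝕜}
    (hM : M.PosDef) (c : ℝ) :
    M.trace + (c : 𝕜) ^ 2 * M⁻¹.trace = 2 * c * Fintype.card n ↔ M = (c : 𝕜) • 1 := by
  set B := M - (c : 𝕜) • 1
  have hBself : Bᴴ = B := by simp [B, conjTranspose_sub, hM.isHermitian.eq]
  have htrace : (B * M⁻¹ * B).trace = M.trace - 2 * c * Fintype.card n + c ^ 2 * M⁻¹.trace :=
    trace_sub_smul_one_mul_inv_mul_sub_smul_one ((isUnit_iff_isUnit_det M).mp hM.isUnit) _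
  calc M.trace + (c : 𝕜) ^ 2 * M⁻¹.trace = 2 * c * Fintype.card n
      ↔ (Bᴴ * M⁻¹ * B).trace = 0 := by rw [hBself, htrace, sub_add_eq_add_sub, sub_eq_zero]
    _ ↔ Bᴴ * M⁻¹ * B = 0 := (hM.inv.posSemidef.conjTranspose_mul_mul_same B).trace_eq_zero_iff
    _ ↔ B = 0 := hM.inv.conjTranspose_mul_mul_same_eq_zero_iff
    _ ↔ M = (c : 𝕜) • 1 := sub_eq_zero

end Matrix

/-- For a real symmetric positive definite `N × N` matrix `M` with `trace M = N ^ 2`,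
`trace M⁻¹ = 1` iff `M = N • I`. -/
theorem trace_inv_eq_one_iff_scalar (N : ℕ) (hN : 0 < N)
    (M : Matrix (Fin N) (Fin N) ℝ)
    (hM : M.PosDef) (htr : M.trace = (N : ℝ) ^ 2) :
    M⁻¹.trace = 1 ↔ M = (N : ℝ) • (1 : Matrix (Fin N) (Fin N) ℝ) := by
  have hN2 : (N : ℝ) ^ 2 ≠ 0 := by positivity
  have h := hM.trace_add_sq_mul_trace_inv_eq_iff N
  simp only [htr, RCLike.ofReal_real_eq_id, id_eq, Fintype.card_fin] at h
  rw [← h, show 2 * (N : ℝ) * N = N ^ 2 + N ^ 2 * 1 by ring, add_right_inj, mul_right_inj' hN2]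
end

section
/- Let N be a positive natural number and let A be an invertible N×N real matrix all of whose entries are +1 or −1. Then trace((AᵀA)⁻¹) ≥ 1, and equality holds if and only if AᵀA = N·I. -/
/-!
For a positive definite `M` and a real `c`, the matrix `(M - c)ᴴ M⁻¹ (M - c) = c² M⁻¹ - 2c + M`
is positive semidefinite, and its trace vanishes only when `M = c`. For `M = AᵀA` with `±1`
entries, `trace M = N²`, so `c = N` gives `N² trace M⁻¹ + N² ≥ 2N²`, with equality exactly
when `AᵀA = N • 1`.
-/

open Matrix

open scoped ComplexOrder

namespace Matrix

variable {m n 𝕜 : Type*} [Fintype m] [Fintype n]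

theorem trace_transpose_mul_self_of_forall_eq_one_or_neg_one {R : Type*} [Ring R]
    {A : Matrix m n R} (hA : ∀ i j, A i j = 1 ∨ A i j = -1) :
    (Aᵀ * A).trace = Fintype.card n * Fintype.card m := by
  have hsq : ∀ i j, A i j * A i j = 1 := fun i j => by rcases hA i j with h | h <;> simp [h]
  simp [trace, mul_apply, hsq]

variable [DecidableEq n] [RCLike 𝕜]

open scoped MatrixOrder in
theorem PosDef.trace_conjTranspose_mul_mul_same_eq_zero_iff {P : Matrix n n 𝕜} (hP : P.PosDef)
    (B : Matrix n m 𝕜) : (Bᴴ * P * B).trace = 0 ↔ B = 0 := by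
  obtain ⟨R, hR, rfl⟩ := CStarAlgebra.isStrictlyPositive_iff_eq_star_mul_self.mp
    hP.isStrictlyPositive
  obtain ⟨_⟩ := hR.nonempty_invertible
  have hRB : Bᴴ * (star R * R) * B = (R * B)ᴴ * (R * B) := by
    simp only [star_eq_conjTranspose, conjTranspose_mul, Matrix.mul_assoc]
  rw [hRB, trace_conjTranspose_mul_self_eq_zero_iff,
    (mul_right_injective_of_invertible R).eq_iff' (Matrix.mul_zero R)]

theorem PosDef.trace_conjTranspose_mul_inv_mul_sub_smul_one {M : Matrix n n 𝕜} (hM : M.PosDef)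
    (c : ℝ) :
    ((M - (c : 𝕜) • 1)ᴴ * M⁻¹ * (M - (c : 𝕜) • 1)).trace
      = (c : 𝕜) ^ 2 * M⁻¹.trace + M.trace - 2 * c * Fintype.card n := by
  have hdet : IsUnit M.det := (isUnit_iff_isUnit_det M).mp hM.isUnit
  rw [conjTranspose_sub, hM.isHermitian.eq]
  simp only [conjTranspose_smul, conjTranspose_one, RCLike.star_def, RCLike.conj_ofReal, sub_mul,
    mul_sub, smul_mul, Matrix.mul_smul, one_mul, mul_one, nonsing_inv_mul _ hdet,
    mul_nonsing_inv _ hdet, trace_sub, trace_smul, trace_one, smul_eq_mul]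
  ring

theorem PosDef.two_mul_card_le_sq_mul_trace_inv_add_trace {M : Matrix n n 𝕜} (hM : M.PosDef)
    (c : ℝ) : 2 * (c : 𝕜) * Fintype.card n ≤ (c : 𝕜) ^ 2 * M⁻¹.trace + M.trace := by
  rw [← sub_nonneg, ← hM.trace_conjTranspose_mul_inv_mul_sub_smul_one]
  exact (hM.inv.posSemidef.conjTranspose_mul_mul_same _).trace_nonneg

theorem PosDef.sq_mul_trace_inv_add_trace_eq_iff {M : Matrix n n 𝕜} (hM : M.PosDef) (c : ℝ) :
    (c : 𝕜) ^ 2 * M⁻¹.trace + M.trace = 2 * c * Fintype.card n ↔ M = (c : 𝕜) • 1 := by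
  rw [← sub_eq_zero, ← hM.trace_conjTranspose_mul_inv_mul_sub_smul_one,
    hM.inv.trace_conjTranspose_mul_mul_same_eq_zero_iff, sub_eq_zero]

end Matrix

/-- Optimality of Hadamard encoding: for an invertible `±1` matrix `A`,
`trace ((Aᵀ * A)⁻¹) ≥ 1`, with equality iff `Aᵀ * A = N • I` (i.e. `A` is Hadamard). -/
theorem hadamard_optimality (N : ℕ) (hN : 0 < N)
    (A : Matrix (Fin N) (Fin N) ℝ) (hinv : IsUnit A.det)
    (hA : ∀ i j, A i j = 1 ∨ A i j = -1) :
    1 ≤ (Aᵀ * A)⁻¹.trace ∧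
      ((Aᵀ * A)⁻¹.trace = 1 ↔ Aᵀ * A = (N : ℝ) • (1 : Matrix (Fin N) (Fin N) ℝ)) := by
  have hM : (Aᵀ * A).PosDef := by
    simpa using PosDef.conjTranspose_mul_self A
      (mulVec_injective_iff_isUnit.mpr ((isUnit_iff_isUnit_det A).mpr hinv))
  have htrace : (Aᵀ * A).trace = N * N := by
    simpa using trace_transpose_mul_self_of_forall_eq_one_or_neg_one hA
  have hle := hM.two_mul_card_le_sq_mul_trace_inv_add_trace N
  have heq := hM.sq_mul_trace_inv_add_trace_eq_iff N
  simp only [RCLike.ofReal_real_eq_id, id, Fintype.card_fin, htrace] at hle heq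
  have hN2 : (0 : ℝ) < N ^ 2 := by positivity
  refine ⟨by nlinarith, ?_⟩
  rw [← heq]
  constructor
  · intro h
    rw [h]
    ring
  · intro h
    nlinarith
end

section
/- Let N be a positive natural number and let A be an invertible N×N real matrix all of whose entries are +1 or −1. Then every diagonal entry of (AᵀA)⁻¹ is at least 1/N, and if AᵀA = N·I then every diagonal entry of (AᵀA)⁻¹ equals exactly 1/N. -/
/-!
Since `(AᵀA)⁻¹ = A⁻¹A⁻ᵀ`, the `j`-th diagonal entry of `(AᵀA)⁻¹` is the squared norm of the
`j`-th row of `A⁻¹`, while the `j`-th diagonal entry of `AᵀA` is the squared norm of the `j`-th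
column of `A`, which is `N` for a `±1` matrix. These two vectors have inner product
`(A⁻¹A)ⱼⱼ = 1`, so Cauchy–Schwarz makes the product of the two diagonal entries at least `1`.
-/

open Matrix

namespace Matrix

variable {n R : Type*} [Fintype n]

lemma transpose_mul_self_apply_self [CommRing R] (A : Matrix n n R) (j : n) :
    (Aᵀ * A) j j = ∑ k, A k j ^ 2 := by
  simp only [mul_apply, transpose_apply, sq]

lemma transpose_mul_self_apply_self_of_forall_eq_one_or_eq_neg_one [CommRing R]
    {A : Matrix n n R} (hA : ∀ i j, A i j = 1 ∨ A i j = -1) (j : n) :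
    (Aᵀ * A) j j = Fintype.card n := by
  have hsq : ∀ k, A k j ^ 2 = 1 := fun k ↦ by rcases hA k j with h | h <;> simp [h]
  simp [transpose_mul_self_apply_self, hsq]

variable [DecidableEq n]

lemma inv_transpose_mul_self_apply_self [CommRing R] (A : Matrix n n R) (j : n) :
    (Aᵀ * A)⁻¹ j j = ∑ k, A⁻¹ j k ^ 2 := by
  rw [mul_inv_rev, ← transpose_nonsing_inv, mul_apply]
  simp only [transpose_apply, sq]

lemma inv_smul_one [Field R] {c : R} (hc : c ≠ 0) : (c • (1 : Matrix n n R))⁻¹ = c⁻¹ • 1 :=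
  inv_eq_left_inv <| by rw [smul_mul_smul, one_mul, inv_mul_cancel₀ hc, one_smul]

variable [Field R] [LinearOrder R] [IsStrictOrderedRing R]

lemma one_le_inv_transpose_mul_self_apply_mul {A : Matrix n n R} (hA : IsUnit A.det) (j : n) :
    1 ≤ (Aᵀ * A)⁻¹ j j * (Aᵀ * A) j j := by
  have hrow_col : ∑ k, A⁻¹ j k * A k j = 1 := by
    rw [← mul_apply, nonsing_inv_mul A hA, one_apply_eq]
  rw [inv_transpose_mul_self_apply_self, transpose_mul_self_apply_self]
  calc (1 : R) = (∑ k, A⁻¹ j k * A k j) ^ 2 := by rw [hrow_col, one_pow]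
    _ ≤ (∑ k, A⁻¹ j k ^ 2) * ∑ k, A k j ^ 2 := Finset.sum_mul_sq_le_sq_mul_sq _ _ _

end Matrix

theorem hadamard_per_cell_general (N : ℕ)
    (A : Matrix (Fin N) (Fin N) ℝ) (hinv : IsUnit A.det)
    (hA : ∀ i j, A i j = 1 ∨ A i j = -1) :
    (∀ j, 1 / (N : ℝ) ≤ (Aᵀ * A)⁻¹ j j) ∧
      (Aᵀ * A = (N : ℝ) • (1 : Matrix (Fin N) (Fin N) ℝ) →
        ∀ j, (Aᵀ * A)⁻¹ j j = 1 / (N : ℝ)) := by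
  have hN : ∀ j : Fin N, (0 : ℝ) < N := fun j ↦ Nat.cast_pos.mpr j.pos
  refine ⟨fun j ↦ ?_, fun hHadamard j ↦ ?_⟩
  · have h := one_le_inv_transpose_mul_self_apply_mul hinv j
    rw [transpose_mul_self_apply_self_of_forall_eq_one_or_eq_neg_one hA, Fintype.card_fin] at h
    rwa [div_le_iff₀ (hN j)]
  · rw [hHadamard, inv_smul_one (hN j).ne', Matrix.smul_apply, one_apply_eq, smul_eq_mul,
      mul_one, one_div]

/-- Per-cell form of Proposition 1: for an invertible `±1` matrix `A`, every diagonal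
entry of `(Aᵀ * A)⁻¹` is at least `1 / N`, and if `Aᵀ * A = N • I` then every diagonal
entry equals exactly `1 / N`. -/
theorem hadamard_per_cell (N : ℕ) (hN : 0 < N)
    (A : Matrix (Fin N) (Fin N) ℝ) (hinv : IsUnit A.det)
    (hA : ∀ i j, A i j = 1 ∨ A i j = -1) :
    (∀ j, 1 / (N : ℝ) ≤ (Aᵀ * A)⁻¹ j j) ∧
      (Aᵀ * A = (N : ℝ) • (1 : Matrix (Fin N) (Fin N) ℝ) →
        ∀ j, (Aᵀ * A)⁻¹ j j = 1 / (N : ℝ)) :=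
  hadamard_per_cell_general N A hinv hA
end

section
/- Let N be a positive natural number, let H be an N×N real matrix with all entries equal to +1 or −1 satisfying HᵀH = N·I whose first column has all entries equal to 1, let w ∈ ℝᴺ, let μ be a real number, and let (Ω, P) be a probability space carrying random variables n₁, …, n_N that are independent, each with mean 0, finite second moment, and variance σ_uc². Define the decoded estimate x̂ⱼ(ω) = (1/N)·Σᵢ H i j · (Σₖ H i k · wₖ + nᵢ(ω) + μ). Then for every index j other than the first, E[x̂ⱼ] = wⱼ and Var(x̂ⱼ) = σ_uc²/N. -/
/-!
Since `HᵀH = N • 1`, decoding `(1/N) Hᵀ` inverts the encoding, so the signal `w` is recovered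
exactly. The common-mode term enters the decoded cell `j` as `μ` times the sum of column `j`,
and this sum is the inner product of column `j` with the all-ones first column, hence zero.
What remains is `w j` plus the noise combination `∑ᵢ (H i j / N) nᵢ`: it has mean zero, and by
independence its variance is `∑ᵢ (H i j)² σ_uc² / N² = σ_uc² / N` because `(H i j)² = 1`.
-/

open Matrix MeasureTheory ProbabilityTheory

namespace Matrix

variable {ι R : Type*} [Fintype ι] [DecidableEq ι]

section CommSemiring

variable [CommSemiring R] {H : Matrix ι ι R} {c : R}

theorem sum_mul_mul_of_transpose_mul_self_eq_smul_one (hH : Hᵀ * H = c • 1) (a b : ι) :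
    ∑ i, H i a * H i b = if a = b then c else 0 := by
  simpa [mul_apply, one_apply] using congrFun (congrFun hH a) b

theorem sum_mul_sum_mul_of_transpose_mul_self_eq_smul_one (hH : Hᵀ * H = c • 1)
    (w : ι → R) (j : ι) : ∑ i, H i j * ∑ k, H i k * w k = c * w j := by
  calc ∑ i, H i j * ∑ k, H i k * w k = ∑ k, (∑ i, H i j * H i k) * w k := by
        simp only [Finset.mul_sum, Finset.sum_mul, mul_assoc]
        exact Finset.sum_comm
    _ = c * w j := by simp [sum_mul_mul_of_transpose_mul_self_eq_smul_one hH]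

theorem sum_col_eq_zero_of_transpose_mul_self_eq_smul_one (hH : Hᵀ * H = c • 1)
    {j₀ j : ι} (hj₀ : ∀ i, H i j₀ = 1) (hj : j ≠ j₀) : ∑ i, H i j = 0 := by
  simpa [hj₀, hj] using sum_mul_mul_of_transpose_mul_self_eq_smul_one hH j j₀

end CommSemiring

theorem inv_mul_sum_mul_add_add_of_transpose_mul_self_eq_smul_one {K : Type*} [Field K]
    {H : Matrix ι ι K} {c : K} (hc : c ≠ 0) (hH : Hᵀ * H = c • 1) {j₀ j : ι}
    (hj₀ : ∀ i, H i j₀ = 1) (hj : j ≠ j₀) (w e : ι → K) (μ : K) :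
    c⁻¹ * ∑ i, H i j * ((∑ k, H i k * w k) + e i + μ) = w j + ∑ i, c⁻¹ * H i j * e i := by
  have hsplit : ∑ i, H i j * ((∑ k, H i k * w k) + e i + μ)
      = (∑ i, H i j * ∑ k, H i k * w k) + (∑ i, H i j * e i) + (∑ i, H i j) * μ := by
    simp only [mul_add, Finset.sum_add_distrib, Finset.sum_mul]
  rw [hsplit, sum_mul_sum_mul_of_transpose_mul_self_eq_smul_one hH,
    sum_col_eq_zero_of_transpose_mul_self_eq_smul_one hH hj₀ hj, zero_mul, add_zero, mul_add,
    inv_mul_cancel_left₀ hc, Finset.mul_sum]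
  simp only [mul_assoc]

end Matrix

namespace ProbabilityTheory

variable {Ω ι : Type*} [MeasurableSpace Ω] {μ : Measure Ω} [IsProbabilityMeasure μ]
  [Fintype ι] {X : ι → Ω → ℝ}

theorem integral_const_add_sum_const_mul_of_integral_eq_zero
    (hint : ∀ i, Integrable (X i) μ) (hmean : ∀ i, ∫ ω, X i ω ∂μ = 0) (a : ℝ) (c : ι → ℝ) :
    ∫ ω, a + ∑ i, c i * X i ω ∂μ = a := by
  rw [integral_add (integrable_const a) (integrable_finsetSum _ fun i _ => (hint i).const_mul _),
    integral_finsetSum _ fun i _ => (hint i).const_mul _]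
  simp [integral_const_mul, hmean]

theorem iIndepFun.variance_const_add_sum_const_mul (hindep : iIndepFun X μ)
    (hmem : ∀ i, MemLp (X i) 2 μ) (a : ℝ) (c : ι → ℝ) :
    variance (fun ω => a + ∑ i, c i * X i ω) μ = ∑ i, c i ^ 2 * variance (X i) μ := by
  have hmemc : ∀ i ∈ Finset.univ, MemLp (fun ω => c i * X i ω) 2 μ :=
    fun i _ => (hmem i).const_mul _
  have hsum : (fun ω => ∑ i, c i * X i ω) = ∑ i, fun ω => c i * X i ω := by
    ext ω; simp
  calc variance (fun ω => a + ∑ i, c i * X i ω) μ = variance (∑ i, fun ω => c i * X i ω) μ := by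
        rw [← hsum]
        exact variance_const_add (memLp_finsetSum _ hmemc).aestronglyMeasurable a
    _ = ∑ i, c i ^ 2 * variance (X i) μ := by
        rw [IndepFun.variance_sum hmemc fun a _ b _ hab =>
          (hindep.indepFun hab).comp (measurable_const_mul _) (measurable_const_mul _)]
        simp only [variance_const_mul]

end ProbabilityTheory

/-- Full verify-read model: measurements `ŷ i = (H w) i + n i + μ` with common-mode `μ`,
decoded by `(1/N) Hᵀ`. For every cell `j` other than the first, the decoded estimate is
unbiased (`E[x̂ j] = w j`) and has variance `σ_uc² / N`. -/
theorem hadamard_verify_unbiased_and_variance (N : ℕ) (hN : 0 < N)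
    (H : Matrix (Fin N) (Fin N) ℝ)
    (hpm : ∀ i j, H i j = 1 ∨ H i j = -1)
    (hH : Hᵀ * H = (N : ℝ) • (1 : Matrix (Fin N) (Fin N) ℝ))
    (hfirst : ∀ i, H i ⟨0, hN⟩ = 1)
    (w : Fin N → ℝ) (μ : ℝ)
    {Ω : Type*} [MeasureSpace Ω] [IsProbabilityMeasure (ℙ : Measure Ω)]
    (n : Fin N → Ω → ℝ) (σuc : ℝ)
    (hindep : iIndepFun n ℙ)
    (hmem : ∀ i, MemLp (n i) 2 ℙ)
    (hmean : ∀ i, ∫ ω, n i ω ∂ℙ = 0)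
    (hvar : ∀ i, variance (n i) ℙ = σuc ^ 2) :
    ∀ j : Fin N, j ≠ ⟨0, hN⟩ →
      (∫ ω, (1 / (N : ℝ)) * ∑ i, H i j * ((∑ k, H i k * w k) + n i ω + μ) ∂ℙ = w j) ∧
      variance
        (fun ω => (1 / (N : ℝ)) * ∑ i, H i j * ((∑ k, H i k * w k) + n i ω + μ)) ℙ
        = σuc ^ 2 / N := by
  intro j hj
  have hN' : (N : ℝ) ≠ 0 := Nat.cast_ne_zero.mpr hN.ne'
  have hdecode : (fun ω => (1 / (N : ℝ)) * ∑ i, H i j * ((∑ k, H i k * w k) + n i ω + μ))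
      = fun ω => w j + ∑ i, (N : ℝ)⁻¹ * H i j * n i ω := by
    ext ω
    rw [one_div, inv_mul_sum_mul_add_add_of_transpose_mul_self_eq_smul_one hN' hH hfirst hj]
  have hsq : ∀ i, H i j ^ 2 = 1 := fun i => by rcases hpm i j with h | h <;> simp [h]
  rw [hdecode, integral_const_add_sum_const_mul_of_integral_eq_zero
      (fun i => (hmem i).integrable one_le_two) hmean,
    hindep.variance_const_add_sum_const_mul hmem]
  refine ⟨rfl, ?_⟩
  simp only [hvar, mul_pow, hsq, mul_one, Finset.sum_const, Finset.card_univ, Fintype.card_fin,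
    nsmul_eq_mul]
  field_simp
end
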